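/- Let σ̂² > 0, P > 0, Γ = P/σ̂², Q(x) = N(x;P), Ŵ(y|x) = N(y−x;σ̂²), and for s > 0 let i_s(x,y) = log( Ŵ(y|x)^s / ∫ Q(x') Ŵ(y|x')^s dx' ). Then ∬_{ℝ²} Q(x) Ŵ(y|x) i_s(x,y) dx dy = (1/2) log(1 + sΓ) + Γ(1−s) / ( 2 ( s^{−1} + Γ ) ), and ∫_ℝ Q(x) [ ∫ Ŵ(y|x) i_s(x,y)² dy − ( ∫ Ŵ(y|x) i_s(x,y) dy )² ] dx = Γ ( 2 + s²Γ ) / ( 2 ( s^{−1} + Γ )² ). -/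

import Mathlib

open Real Filter MeasureTheory

/-- Centered Gaussian density with variance `v`: `N(z; v)`. -/
noncomputable def gauss (z v : ℝ) : ℝ :=
  (Real.sqrt (2 * Real.pi * v))⁻¹ * Real.exp (-(z ^ 2) / (2 * v))

/-- Mismatched information density for Gaussian input `N(x;P)` and
nearest-neighbor metric `N(y−x;σ̂²)`. -/
noncomputable def iGauss (σ2 P s x y : ℝ) : ℝ :=
  Real.log (gauss (y - x) σ2 ^ s / ∫ x', gauss x' P * gauss (y - x') σ2 ^ s)

/-! The tilted metric `Ŵ(y|x)^s` is, up to a constant factor, the Gaussian density with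
variance `σ̂²/s`, so the denominator of `i_s` is a Gaussian convolution and
`i_s(x, x + z) = A z² + (x/b) z + (log (1 + sΓ)/2 + x²/(2b))` with `b = P + σ̂²/s` and
`A = 1/(2b) - s/(2σ̂²)`. Both quantities thus reduce to the moments `E z² = v`, `E z⁴ = 3v²`
of a centred Gaussian: the conditional variance of `A z² + B z + C` is `2A²v² + B²v`. -/

lemma gauss_eq_mul_exp (z v : ℝ) :
    gauss z v = (√(2 * π * v))⁻¹ * exp (-(1 / (2 * v)) * z ^ 2) := by
  unfold gauss; congr 2; ring

lemma gauss_neg (z v : ℝ) : gauss (-z) v = gauss z v := by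
  simp [gauss]

section GaussianIntegrals

variable {v x A B C : ℝ} {f : ℝ → ℝ}

lemma gauss_pos (hv : 0 < v) (z : ℝ) : 0 < gauss z v := by
  unfold gauss
  have : 0 < √(2 * π * v) := Real.sqrt_pos.2 (by positivity)
  positivity

lemma log_gauss (hv : 0 < v) (z : ℝ) :
    log (gauss z v) = -(log (2 * π * v) / 2) - z ^ 2 / (2 * v) := by
  unfold gauss
  rw [log_mul (by positivity) (exp_pos _).ne', log_inv, log_sqrt (by positivity), log_exp]
  ring

lemma integrable_pow_mul_gauss (hv : 0 < v) (n : ℕ) :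
    Integrable (fun z : ℝ => z ^ n * gauss z v) := by
  have h := integrable_rpow_mul_exp_neg_mul_sq (b := 1 / (2 * v)) (by positivity)
    (s := n) (by linarith [n.cast_nonneg (α := ℝ)])
  refine (h.const_mul (√(2 * π * v))⁻¹).congr (Eventually.of_forall fun z => ?_)
  simp only [gauss_eq_mul_exp, rpow_natCast]
  ring

lemma integral_pow_mul_gauss_of_odd {n : ℕ} (hn : Odd n) : ∫ z : ℝ, z ^ n * gauss z v = 0 := by
  have h := integral_neg_eq_self (fun z : ℝ => z ^ n * gauss z v) volume
  simp only [hn.neg_pow, gauss_neg, neg_mul, integral_neg] at h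
  linarith

lemma integral_mul_gauss : ∫ z : ℝ, z * gauss z v = 0 := by
  simpa using integral_pow_mul_gauss_of_odd (v := v) odd_one

lemma integral_even_pow_mul_gauss (hv : 0 < v) (k : ℕ) :
    ∫ z : ℝ, z ^ (2 * k) * gauss z v = (2 * v) ^ k * Gamma (k + 1 / 2) / √π := by
  have hb : 0 < 1 / (2 * v) := by positivity
  have hIoi : ∫ z in Set.Ioi (0 : ℝ), z ^ (2 * k) * exp (-(1 / (2 * v)) * z ^ 2)
      = (2 * v) ^ k * √(2 * v) * Gamma (k + 1 / 2) / 2 := by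
    have h := integral_rpow_mul_exp_neg_mul_rpow (q := (2 * k : ℕ)) two_pos
      (by linarith [(2 * k).cast_nonneg (α := ℝ)]) hb
    simp only [rpow_natCast, rpow_two] at h
    rw [h, neg_div, one_div, inv_rpow (by positivity), rpow_neg (by positivity), inv_inv,
      show ((2 * k : ℕ) + 1 : ℝ) / 2 = k + 1 / 2 by push_cast; ring,
      rpow_add (by positivity), rpow_natCast, ← sqrt_eq_rpow]
    ring
  calc ∫ z : ℝ, z ^ (2 * k) * gauss z v
      = (√(2 * π * v))⁻¹ * ∫ z : ℝ, |z| ^ (2 * k) * exp (-(1 / (2 * v)) * |z| ^ 2) := by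
        rw [← integral_const_mul]
        congr 1; funext z
        rw [pow_mul, pow_mul, sq_abs, gauss_eq_mul_exp]; ring
    _ = (2 * v) ^ k * Gamma (k + 1 / 2) / √π := by
        rw [integral_comp_abs (f := fun z => z ^ (2 * k) * exp (-(1 / (2 * v)) * z ^ 2)), hIoi,
          show 2 * π * v = 2 * v * π by ring, sqrt_mul (by positivity)]
        have : 0 < √(2 * v) := Real.sqrt_pos.2 (by positivity)
        have : 0 < √π := Real.sqrt_pos.2 pi_pos
        field_simp

lemma integral_gauss (hv : 0 < v) : ∫ z : ℝ, gauss z v = 1 := by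
  have h := integral_even_pow_mul_gauss hv 0
  simp only [mul_zero, pow_zero, one_mul, Nat.cast_zero, zero_add, Gamma_one_half_eq] at h
  rw [h, div_self (Real.sqrt_pos.2 pi_pos).ne']

lemma integral_sq_mul_gauss (hv : 0 < v) : ∫ z : ℝ, z ^ 2 * gauss z v = v := by
  have h := integral_even_pow_mul_gauss hv 1
  rw [show (1 : ℕ) + (1 : ℝ) / 2 = 1 / 2 + 1 by norm_num, Gamma_add_one (by norm_num),
    Gamma_one_half_eq] at h
  rw [h]
  field_simp [(Real.sqrt_pos.2 pi_pos).ne']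

lemma integral_pow_four_mul_gauss (hv : 0 < v) : ∫ z : ℝ, z ^ 4 * gauss z v = 3 * v ^ 2 := by
  have h := integral_even_pow_mul_gauss hv 2
  rw [show (2 : ℕ) + (1 : ℝ) / 2 = (1 / 2 + 1) + 1 by norm_num, Gamma_add_one (by norm_num),
    Gamma_add_one (by norm_num), Gamma_one_half_eq] at h
  rw [h]
  field_simp [(Real.sqrt_pos.2 pi_pos).ne']
  ring

lemma integral_sum_pow_mul_gauss (hv : 0 < v) {N : ℕ} (a : Fin N → ℝ) :
    ∫ z : ℝ, (∑ i, a i * z ^ (i : ℕ)) * gauss z v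
      = ∑ i, a i * ∫ z : ℝ, z ^ (i : ℕ) * gauss z v := by
  simp_rw [Finset.sum_mul, mul_assoc]
  rw [integral_finsetSum _ fun (i : Fin N) _ => (integrable_pow_mul_gauss hv i).const_mul (a i)]
  simp_rw [integral_const_mul]

lemma integral_quadratic_mul_gauss (hv : 0 < v) (A B C : ℝ) :
    ∫ z : ℝ, (A * z ^ 2 + B * z + C) * gauss z v = A * v + C := by
  calc ∫ z : ℝ, (A * z ^ 2 + B * z + C) * gauss z v
      = ∫ z : ℝ, (∑ i, ![C, B, A] i * z ^ (i : ℕ)) * gauss z v := by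
        congr 1; funext z; congr 1; simp [Fin.sum_univ_succ]; ring
    _ = A * v + C := by
        rw [integral_sum_pow_mul_gauss hv]
        simp [Fin.sum_univ_succ, integral_gauss hv, integral_sq_mul_gauss hv,
          integral_mul_gauss]
        ring

lemma integral_sq_quadratic_mul_gauss (hv : 0 < v) (A B C : ℝ) :
    ∫ z : ℝ, (A * z ^ 2 + B * z + C) ^ 2 * gauss z v
      = (A * v + C) ^ 2 + 2 * A ^ 2 * v ^ 2 + B ^ 2 * v := by
  calc ∫ z : ℝ, (A * z ^ 2 + B * z + C) ^ 2 * gauss z v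
      = ∫ z : ℝ, (∑ i, ![C ^ 2, 2 * B * C, B ^ 2 + 2 * A * C, 2 * A * B, A ^ 2] i * z ^ (i : ℕ))
          * gauss z v := by
        congr 1; funext z; congr 1; simp [Fin.sum_univ_succ]; ring
    _ = (A * v + C) ^ 2 + 2 * A ^ 2 * v ^ 2 + B ^ 2 * v := by
        rw [integral_sum_pow_mul_gauss hv]
        simp [Fin.sum_univ_succ, integral_gauss hv, integral_sq_mul_gauss hv,
          integral_pow_four_mul_gauss hv, integral_mul_gauss,
          integral_pow_mul_gauss_of_odd (v := v) (n := 3) (by decide)]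
        ring

lemma integral_gauss_sub_mul_of_quadratic (hv : 0 < v)
    (hf : ∀ z, f (z + x) = A * z ^ 2 + B * z + C) :
    ∫ y, gauss (y - x) v * f y = A * v + C := by
  rw [← integral_add_right_eq_self _ x, ← integral_quadratic_mul_gauss hv A B C]
  simp_rw [add_sub_cancel_right, hf, mul_comm]

lemma integral_gauss_sub_mul_sq_of_quadratic (hv : 0 < v)
    (hf : ∀ z, f (z + x) = A * z ^ 2 + B * z + C) :
    ∫ y, gauss (y - x) v * f y ^ 2 = (A * v + C) ^ 2 + 2 * A ^ 2 * v ^ 2 + B ^ 2 * v := by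
  rw [← integral_add_right_eq_self _ x, ← integral_sq_quadratic_mul_gauss hv A B C]
  simp_rw [add_sub_cancel_right, hf, mul_comm]

end GaussianIntegrals

lemma integral_gauss_mul_gauss_sub {p a : ℝ} (hp : 0 < p) (ha : 0 < a) (y : ℝ) :
    ∫ x : ℝ, gauss x p * gauss (y - x) a = gauss y (p + a) := by
  have hv : 0 < p * a / (p + a) := by positivity
  -- completing the square in `x`
  have hsplit : ∀ x : ℝ, gauss x p * gauss (y - x) a
      = gauss y (p + a) * gauss (x - p * y / (p + a)) (p * a / (p + a)) := by
    intro x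
    unfold gauss
    rw [mul_mul_mul_comm, ← exp_add, mul_mul_mul_comm, ← exp_add]
    congr 1
    · rw [← mul_inv, ← mul_inv, ← sqrt_mul (by positivity), ← sqrt_mul (by positivity)]
      congr 1
      field_simp
    · congr 1
      field_simp
      ring
  simp_rw [hsplit, integral_const_mul,
    integral_sub_right_eq_self (fun x => gauss x (p * a / (p + a))), integral_gauss hv, mul_one]

lemma gauss_rpow {v s : ℝ} (hv : 0 < v) (hs : 0 < s) (z : ℝ) :
    gauss z v ^ s = (√(2 * π * v))⁻¹ ^ s * √(2 * π * (v / s)) * gauss z (v / s) := by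
  have : 0 < √(2 * π * (v / s)) := Real.sqrt_pos.2 (by positivity)
  unfold gauss
  rw [mul_rpow (by positivity) (exp_pos _).le, ← exp_mul,
    show -(z ^ 2) / (2 * v) * s = -(z ^ 2) / (2 * (v / s)) by field_simp]
  field_simp

lemma iGauss_eq {σ2 P s : ℝ} (hσ : 0 < σ2) (hP : 0 < P) (hs : 0 < s) (x y : ℝ) :
    iGauss σ2 P s x y = log (1 + s * (P / σ2)) / 2
      - s * (y - x) ^ 2 / (2 * σ2) + y ^ 2 / (2 * (P + σ2 / s)) := by
  have hσs : 0 < σ2 / s := by positivity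
  have hK : 0 < (√(2 * π * σ2))⁻¹ ^ s * √(2 * π * (σ2 / s)) := by
    have : 0 < √(2 * π * σ2) := Real.sqrt_pos.2 (by positivity)
    have : 0 < √(2 * π * (σ2 / s)) := Real.sqrt_pos.2 (by positivity)
    positivity
  have hden : ∫ x', gauss x' P * gauss (y - x') σ2 ^ s
      = (√(2 * π * σ2))⁻¹ ^ s * √(2 * π * (σ2 / s)) * gauss y (P + σ2 / s) := by
    simp_rw [gauss_rpow hσ hs, mul_left_comm (gauss _ P), integral_const_mul,
      integral_gauss_mul_gauss_sub hP hσs]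
  have hlog : log (2 * π * (P + σ2 / s)) - log (2 * π * (σ2 / s)) = log (1 + s * (P / σ2)) := by
    rw [← log_div (by positivity) (by positivity)]
    congr 1
    field_simp
    ring
  rw [iGauss, hden, gauss_rpow hσ hs, mul_div_mul_left _ _ hK.ne',
    log_div (gauss_pos hσs _).ne' (gauss_pos (by positivity) _).ne', log_gauss hσs,
    log_gauss (by positivity), ← hlog]
  field_simp
  ring

lemma iGauss_add_eq_quadratic {σ2 P s : ℝ} (hσ : 0 < σ2) (hP : 0 < P) (hs : 0 < s) (x z : ℝ) :
    iGauss σ2 P s x (z + x)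
      = (1 / (2 * (P + σ2 / s)) - s / (2 * σ2)) * z ^ 2 + x / (P + σ2 / s) * z
        + (log (1 + s * (P / σ2)) / 2 + x ^ 2 / (2 * (P + σ2 / s))) := by
  rw [iGauss_eq hσ hP hs, add_sub_cancel_right]
  field_simp
  ring

/-- Closed forms of `I^ML_s` and `V_s` for Gaussian codebooks with
nearest-neighbor decoding, where `Γ = P/σ̂²`. -/
theorem stmt16 (σ2 P s : ℝ) (hσ : 0 < σ2) (hP : 0 < P) (hs : 0 < s) :
    (∫ x, ∫ y, gauss x P * gauss (y - x) σ2 * iGauss σ2 P s x y)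
        = (1 / 2) * Real.log (1 + s * (P / σ2))
          + (P / σ2) * (1 - s) / (2 * (s⁻¹ + P / σ2)) ∧
    (∫ x, gauss x P * ((∫ y, gauss (y - x) σ2 * (iGauss σ2 P s x y) ^ 2)
        - (∫ y, gauss (y - x) σ2 * iGauss σ2 P s x y) ^ 2))
        = (P / σ2) * (2 + s ^ 2 * (P / σ2)) / (2 * (s⁻¹ + P / σ2) ^ 2) := by
  have hmean x := integral_gauss_sub_mul_of_quadratic hσ (iGauss_add_eq_quadratic hσ hP hs x)
  have hsq x := integral_gauss_sub_mul_sq_of_quadratic hσ (iGauss_add_eq_quadratic hσ hP hs x)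
  set b := P + σ2 / s with hb
  set L := log (1 + s * (P / σ2)) / 2 with hL
  set A := 1 / (2 * b) - s / (2 * σ2) with hA
  clear_value A L b
  constructor
  · calc (∫ x, ∫ y, gauss x P * gauss (y - x) σ2 * iGauss σ2 P s x y)
        = ∫ x, (1 / (2 * b) * x ^ 2 + 0 * x + (A * σ2 + L)) * gauss x P := by
          congr 1; funext x
          simp_rw [mul_assoc, integral_const_mul, hmean]
          ring
      _ = _ := by
          rw [integral_quadratic_mul_gauss hP]
          subst A L b
          field_simp
          ring
  · calc (∫ x, gauss x P * ((∫ y, gauss (y - x) σ2 * (iGauss σ2 P s x y) ^ 2)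
        - (∫ y, gauss (y - x) σ2 * iGauss σ2 P s x y) ^ 2))
        = ∫ x, (σ2 / b ^ 2 * x ^ 2 + 0 * x + 2 * A ^ 2 * σ2 ^ 2) * gauss x P := by
          congr 1; funext x
          rw [hsq, hmean]
          ring
      _ = _ := by
          rw [integral_quadratic_mul_gauss hP]
          subst A L b
          field_simp
          ring
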